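/- Let $\pg$ be a finite-dimensional inner product space and $\mu_\pg$ an alternating bilinear map with all $\mathrm{ad}_\pg X$ skew-symmetric, invariant under a subgroup $K$ of orthogonal maps. Then the kernel of $\mathrm{Cas}_\pg$ restricted to $K$-invariant symmetric operators equals $\{A\in\mathrm{Sym}(\pg): [A,\mathrm{ad}\,Z|_\pg]=0\ \forall Z\in\kg \text{ and } [A,\mathrm{ad}_\pg X]=0\ \forall X\in\pg\}$; in particular, this kernel equals $\mathbb{R}I$ if and only if there is no nontrivial subspace of $\pg$ invariant under all operators in $\mathrm{ad}\,\kg|_\pg + \mathrm{ad}_\pg\pg$. -/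

import Mathlib

/-! For skew-symmetric `ad_p X`, the trace form gives `⟨Cas_p A, A⟩ = ∑ᵢ ‖[ad_p Xᵢ, A]‖²`, so
`Cas_p A = 0` forces `A` to commute with `ad_p Xᵢ` for a basis, hence with every `ad_p X`.
For the second part, the orthogonal projection onto a subspace invariant under the skew family
`ad k|_p ∪ ad_p p` commutes with the family (the orthogonal complement is invariant too), and
conversely every eigenspace of a symmetric operator commuting with the family is invariant. -/

noncomputable section

variable {V : Type*} [NormedAddCommGroup V] [InnerProductSpace ℝ V] [FiniteDimensional ℝ V]

/-- The representation `θ(A)λ = Aλ(·,·) - λ(A·,·) - λ(·,A·)`. -/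
def theta (A : Module.End ℝ V) (lam : V → V → V) : V → V → V :=
  fun X Y => A (lam X Y) - lam (A X) Y - lam X (A Y)

/-- The inner product on `Λ²p*⊗p` relative to an orthonormal basis. -/
def bip {ι : Type*} [Fintype ι] (b : OrthonormalBasis ι ℝ V) (f g : V → V → V) : ℝ :=
  ∑ i, ∑ j, (inner ℝ (f (b i) (b j)) (g (b i) (b j)) : ℝ)

/-- The trace inner product `⟨A,B⟩ = tr(A Bᵗ)` on `gl(p)`. -/
def eip (A B : Module.End ℝ V) : ℝ :=
  LinearMap.trace ℝ V (A ∘ₗ LinearMap.adjoint (B : V →ₗ[ℝ] V))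

/-- Commutator of endomorphisms. -/
def opComm (P Q : Module.End ℝ V) : Module.End ℝ V := P ∘ₗ Q - Q ∘ₗ P

/-- `Cas_p(A) = -∑ [ad_p Xᵢ, [ad_p Xᵢ, A]]`. -/
def casOp {ι : Type*} [Fintype ι] (b : OrthonormalBasis ι ℝ V)
    (μ : V →ₗ[ℝ] V →ₗ[ℝ] V) (A : Module.End ℝ V) : Module.End ℝ V :=
  -∑ i, opComm (μ (b i)) (opComm (μ (b i)) A)

open LinearMap (adjoint)

section

variable {E : Type*} [NormedAddCommGroup E] [InnerProductSpace ℝ E]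

theorem opComm_neg_left (P Q : Module.End ℝ E) : opComm (-P) Q = -opComm P Q := by
  simp only [opComm, LinearMap.neg_comp, LinearMap.comp_neg, neg_sub_neg, neg_sub]

theorem opComm_eq_zero_iff_commute {P Q : Module.End ℝ E} : opComm P Q = 0 ↔ Commute P Q :=
  sub_eq_zero

theorem Submodule.eq_bot_or_eq_top_of_starProjection_eq_smul_one {W : Submodule ℝ E}
    [W.HasOrthogonalProjection] {c : ℝ} (h : (W.starProjection : Module.End ℝ E) = c • 1) :
    W = ⊥ ∨ W = ⊤ := by
  have hrange : LinearMap.range (W.starProjection : Module.End ℝ E) = W := by simp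
  rw [← hrange, h]
  by_cases hc : c = 0
  · simp [hc]
  · simp [LinearMap.range_smul _ _ hc, Module.End.one_eq_id]

end

section TraceForm

theorem eip_self_eq_sum_norm_sq {ι : Type*} [Fintype ι] (b : OrthonormalBasis ι ℝ V)
    (C : Module.End ℝ V) : eip C C = ∑ i, ‖adjoint C (b i)‖ ^ 2 := by
  rw [eip, LinearMap.trace_eq_sum_inner _ b]
  refine Finset.sum_congr rfl fun i _ => ?_
  rw [LinearMap.comp_apply, ← LinearMap.adjoint_inner_left, real_inner_self_eq_norm_sq]

theorem eip_self_nonneg (C : Module.End ℝ V) : 0 ≤ eip C C := by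
  rw [eip_self_eq_sum_norm_sq (stdOrthonormalBasis ℝ V)]
  positivity

theorem eip_self_eq_zero {C : Module.End ℝ V} : eip C C = 0 ↔ C = 0 := by
  refine ⟨fun h => ?_, fun h => by simp [h, eip]⟩
  let b := stdOrthonormalBasis ℝ V
  rw [eip_self_eq_sum_norm_sq b, Finset.sum_eq_zero_iff_of_nonneg fun _ _ => by positivity] at h
  have hadj : adjoint C = 0 := b.toBasis.ext fun i => by simpa using h i (Finset.mem_univ i)
  simpa using congrArg adjoint hadj

theorem eip_opComm_left (B X Y : Module.End ℝ V) :
    eip (opComm B X) Y = eip X (opComm (adjoint B) Y) := by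
  simp only [eip, opComm, ← Module.End.mul_eq_comp, ← LinearMap.star_eq_adjoint, star_mul,
    star_star, sub_mul, mul_sub, map_sub, mul_assoc]
  rw [LinearMap.trace_mul_comm ℝ B, mul_assoc]

theorem eip_neg_sum_left {ι : Type*} (s : Finset ι) (f : ι → Module.End ℝ V)
    (Y : Module.End ℝ V) : eip (-∑ i ∈ s, f i) Y = -∑ i ∈ s, eip (f i) Y := by
  simp [eip, ← Module.End.mul_eq_comp, Finset.sum_mul, map_sum]

theorem eip_neg_right (X Y : Module.End ℝ V) : eip X (-Y) = -eip X Y := by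
  simp [eip]

end TraceForm

section Casimir

variable {ι : Type*} [Fintype ι] (b : OrthonormalBasis ι ℝ V) {μ : V →ₗ[ℝ] V →ₗ[ℝ] V}

theorem eip_casOp_self (hskew : ∀ X, adjoint (μ X) = -μ X) (A : Module.End ℝ V) :
    eip (casOp b μ A) A = ∑ i, eip (opComm (μ (b i)) A) (opComm (μ (b i)) A) := by
  rw [casOp, eip_neg_sum_left, ← Finset.sum_neg_distrib]
  refine Finset.sum_congr rfl fun i _ => ?_
  rw [eip_opComm_left, hskew, opComm_neg_left, eip_neg_right, neg_neg]

theorem casOp_eq_zero_iff (hskew : ∀ X, adjoint (μ X) = -μ X) (A : Module.End ℝ V) :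
    casOp b μ A = 0 ↔ ∀ X, Commute A (μ X) := by
  constructor
  · intro h X
    have hbasis : ∀ i, Commute (μ (b i)) A := by
      have hsum := eip_casOp_self b hskew A
      rw [h, eip, LinearMap.zero_comp, map_zero, eq_comm,
        Finset.sum_eq_zero_iff_of_nonneg fun i _ => eip_self_nonneg _] at hsum
      exact fun i =>
        opComm_eq_zero_iff_commute.mp (eip_self_eq_zero.mp (hsum i (Finset.mem_univ i)))
    rw [← b.sum_repr' X, map_sum]
    exact Commute.sum_right _ _ _ fun i _ => by rw [map_smul]; exact (hbasis i).symm.smul_right _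
  · intro h
    have hbasis : ∀ i, opComm (μ (b i)) A = 0 := fun i =>
      opComm_eq_zero_iff_commute.mpr (h (b i)).symm
    simp only [casOp, hbasis]
    simp [opComm]

end Casimir

section InvariantSubspaces

theorem Submodule.orthogonal_mem_invtSubmodule_of_adjoint_eq_neg {T : Module.End ℝ V}
    (hT : adjoint T = -T) {W : Submodule ℝ V} (hW : W ∈ T.invtSubmodule) :
    Wᗮ ∈ T.invtSubmodule := by
  intro x hx u hu
  rw [← LinearMap.adjoint_inner_left, hT, LinearMap.neg_apply, inner_neg_left, hx _ (hW hu),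
    neg_zero]

theorem Submodule.commute_starProjection_of_adjoint_eq_neg {T : Module.End ℝ V}
    (hT : adjoint T = -T) {W : Submodule ℝ V} (hW : W ∈ T.invtSubmodule) :
    Commute (W.starProjection : Module.End ℝ V) T :=
  LinearMap.IsIdempotentElem.commute_iff
    (ContinuousLinearMap.IsIdempotentElem.toLinearMap W.isIdempotentElem_starProjection) |>.mpr
    ⟨by simpa using hW, by simpa using W.orthogonal_mem_invtSubmodule_of_adjoint_eq_neg hT hW⟩

theorem LinearMap.IsSymmetric.exists_eq_smul_one_of_eigenspace_eq_bot_or_eq_top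
    {A : Module.End ℝ V} (hA : A.IsSymmetric)
    (h : ∀ c : ℝ, A.eigenspace c = ⊥ ∨ A.eigenspace c = ⊤) : ∃ c : ℝ, A = c • 1 := by
  cases subsingleton_or_nontrivial V
  · exact ⟨0, LinearMap.ext fun _ => Subsingleton.elim _ _⟩
  · obtain ⟨c, hc⟩ : ∃ c, A.HasEigenvalue c := ⟨_, hA.hasEigenvalue_iSup_of_finiteDimensional⟩
    refine ⟨c, LinearMap.ext fun x => ?_⟩
    have hx : x ∈ A.eigenspace c := ((h _).resolve_left hc).symm ▸ Submodule.mem_top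
    simpa using Module.End.mem_eigenspace_iff.mp hx

end InvariantSubspaces

theorem statement17_general {n : ℕ} (b : OrthonormalBasis (Fin n) ℝ V)
    (μ : V →ₗ[ℝ] V →ₗ[ℝ] V)
    (hskew : ∀ X : V, LinearMap.adjoint (μ X) = -(μ X))
    (S : Set (Module.End ℝ V))
    (hSskew : ∀ Z ∈ S, LinearMap.adjoint (Z : V →ₗ[ℝ] V) = -(Z : V →ₗ[ℝ] V)) :
    ({A : Module.End ℝ V | LinearMap.IsSymmetric (A : V →ₗ[ℝ] V) ∧
        (∀ Z ∈ S, opComm A Z = 0) ∧ casOp b μ A = 0} =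
      {A : Module.End ℝ V | LinearMap.IsSymmetric (A : V →ₗ[ℝ] V) ∧
        (∀ Z ∈ S, opComm A Z = 0) ∧ ∀ X : V, opComm A (μ X) = 0}) ∧
    (({A : Module.End ℝ V | LinearMap.IsSymmetric (A : V →ₗ[ℝ] V) ∧
        (∀ Z ∈ S, opComm A Z = 0) ∧ casOp b μ A = 0} =
          {A : Module.End ℝ V | ∃ c : ℝ, A = c • (1 : Module.End ℝ V)}) ↔
      (∀ W : Submodule ℝ V, (∀ Z ∈ S, ∀ x ∈ W, Z x ∈ W) →
        (∀ X : V, ∀ x ∈ W, μ X x ∈ W) → W = ⊥ ∨ W = ⊤)) := by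
  have hker : {A : Module.End ℝ V | A.IsSymmetric ∧ (∀ Z ∈ S, opComm A Z = 0) ∧ casOp b μ A = 0}
      = {A | A.IsSymmetric ∧ (∀ Z ∈ S, opComm A Z = 0) ∧ ∀ X, opComm A (μ X) = 0} := by
    ext A
    simp only [Set.mem_ofPred_eq, casOp_eq_zero_iff b hskew, opComm_eq_zero_iff_commute]
  refine ⟨hker, hker ▸ ⟨fun hscalar W hWS hWμ => ?_, fun hirr => ?_⟩⟩
  · obtain ⟨c, hc⟩ : ∃ c : ℝ, (W.starProjection : Module.End ℝ V) = c • 1 := by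
      change _ ∈ {A : Module.End ℝ V | ∃ c : ℝ, A = c • 1}
      refine hscalar ▸ ⟨W.starProjection_isSymmetric, fun Z hZ => ?_, fun X => ?_⟩
      · exact opComm_eq_zero_iff_commute.mpr
          (W.commute_starProjection_of_adjoint_eq_neg (hSskew Z hZ) (hWS Z hZ))
      · exact opComm_eq_zero_iff_commute.mpr
          (W.commute_starProjection_of_adjoint_eq_neg (hskew X) (hWμ X))
    exact W.eq_bot_or_eq_top_of_starProjection_eq_smul_one hc
  · ext A
    simp only [Set.mem_ofPred_eq, opComm_eq_zero_iff_commute]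
    constructor
    · rintro ⟨hA, hAS, hAμ⟩
      refine hA.exists_eq_smul_one_of_eigenspace_eq_bot_or_eq_top fun c => hirr _ ?_ ?_
      · exact fun Z hZ x hx => Module.End.mapsTo_genEigenspace_of_comm (hAS Z hZ) c 1 hx
      · exact fun X x hx => Module.End.mapsTo_genEigenspace_of_comm (hAμ X) c 1 hx
    · rintro ⟨c, rfl⟩
      exact ⟨LinearMap.IsSymmetric.one.smul (conj_trivial c),
        fun Z _ => (Commute.one_left Z).smul_left c, fun X => (Commute.one_left _).smul_left c⟩

/-- the kernel of `Cas_p` on `K`-invariant symmetric operators is the set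
of symmetric operators commuting with the isotropy action `S = ad k|_p` and with all
`ad_p X`; it equals `ℝ I` iff `p` has no nontrivial subspace invariant under
`ad k|_p + ad_p p`. -/
theorem statement17 {n : ℕ} (b : OrthonormalBasis (Fin n) ℝ V)
    (μ : V →ₗ[ℝ] V →ₗ[ℝ] V) (halt : ∀ X, μ X X = 0)
    (hskew : ∀ X : V, LinearMap.adjoint (μ X) = -(μ X))
    (S : Set (Module.End ℝ V))
    (hSskew : ∀ Z ∈ S, LinearMap.adjoint (Z : V →ₗ[ℝ] V) = -(Z : V →ₗ[ℝ] V))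
    -- each `Z ∈ S` acts as a derivation of `μ` (K-invariance of the bracket)
    (hSder : ∀ Z ∈ S, ∀ X Y : V, Z (μ X Y) = μ (Z X) Y + μ X (Z Y)) :
    ({A : Module.End ℝ V | LinearMap.IsSymmetric (A : V →ₗ[ℝ] V) ∧
        (∀ Z ∈ S, opComm A Z = 0) ∧ casOp b μ A = 0} =
      {A : Module.End ℝ V | LinearMap.IsSymmetric (A : V →ₗ[ℝ] V) ∧
        (∀ Z ∈ S, opComm A Z = 0) ∧ ∀ X : V, opComm A (μ X) = 0}) ∧
    (({A : Module.End ℝ V | LinearMap.IsSymmetric (A : V →ₗ[ℝ] V) ∧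
        (∀ Z ∈ S, opComm A Z = 0) ∧ casOp b μ A = 0} =
          {A : Module.End ℝ V | ∃ c : ℝ, A = c • (1 : Module.End ℝ V)}) ↔
      (∀ W : Submodule ℝ V, (∀ Z ∈ S, ∀ x ∈ W, Z x ∈ W) →
        (∀ X : V, ∀ x ∈ W, μ X x ∈ W) → W = ⊥ ∨ W = ⊤)) :=
  statement17_general b μ hskew S hSskew

end
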